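/- arXiv:2102.06880 — 3 statements merged into one kernel-verified Lean document; each statement's English description precedes it below -/
import Mathlib

section
/- Let G be a finite graph with a star coloring γ. Orienting every edge of each bicolored star away from its center yields an orientation of G with the property: for every vertex v and every in-neighbor u of v, the vertex u is the unique neighbor of v whose color equals γ(u). -/
def IsStarForest {V : Type*} (H : SimpleGraph V) : Prop :=
  ∃ C : Set V, (∀ u v : V, H.Adj u v → (u ∈ C ↔ v ∉ C)) ∧
    ∀ v ∉ C, ∀ u w : V, H.Adj v u → H.Adj v w → u = w

def IsStarColoring {V : Type*} (G : SimpleGraph V) (c : ℕ) (γ : V → Fin c) : Prop :=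
  (∀ u v : V, G.Adj u v → γ u ≠ γ v) ∧
  ∀ i j : Fin c, i ≠ j →
    IsStarForest (SimpleGraph.fromEdgeSet
      {e | e ∈ G.edgeSet ∧ ∀ v ∈ e, γ v = i ∨ γ v = j})

/-- Given a star coloring of a finite graph `G`, orienting every bicolored star away
from its center yields an orientation `D` of `G` such that every in-neighbor `u` of a
vertex `v` is the unique neighbor of `v` with color `γ u`. -/
theorem star_coloring_orientation {V : Type*} [Fintype V]
    (G : SimpleGraph V) (c : ℕ) (γ : V → Fin c)
    (h : IsStarColoring G c γ) :
    ∃ D : V → V → Prop,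
      (∀ u v : V, G.Adj u v ↔ (D u v ∨ D v u)) ∧
      (∀ u v : V, D u v → ¬ D v u) ∧
      (∀ u v : V, D u v → ∀ w : V, G.Adj v w → γ w = γ u → w = u) := by
  classical
  obtain ⟨hprop, hstar⟩ := h
  choose C hC1 hC2 using fun (i j : Fin c) (hij : i ≠ j) => hstar i j hij
  set Hg : Fin c → Fin c → SimpleGraph V := fun i j =>
    SimpleGraph.fromEdgeSet {e | e ∈ G.edgeSet ∧ ∀ v ∈ e, γ v = i ∨ γ v = j} with hHg
  have hAdj : ∀ (i j : Fin c) (x y : V), (Hg i j).Adj x y ↔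
      G.Adj x y ∧ (γ x = i ∨ γ x = j) ∧ (γ y = i ∨ γ y = j) := by
    intro i j x y
    rw [hHg]
    simp only [SimpleGraph.fromEdgeSet_adj, Set.mem_setOf_eq, SimpleGraph.mem_edgeSet]
    constructor
    · rintro ⟨⟨hadj, hmem⟩, _⟩
      exact ⟨hadj, hmem x (by simp), hmem y (by simp)⟩
    · rintro ⟨hadj, hx, hy⟩
      refine ⟨⟨hadj, ?_⟩, hadj.ne⟩
      intro v hv
      rcases Sym2.mem_iff.mp hv with rfl | rfl
      · exact hx
      · exact hy
  have hHsym : ∀ (i j : Fin c) (x y : V), (Hg i j).Adj x y ↔ (Hg j i).Adj x y := by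
    intro i j x y
    rw [hAdj, hAdj]
    tauto
  set C' : Fin c → Fin c → Set V := fun i j =>
    if h1 : i < j then C i j h1.ne else if h2 : j < i then C j i h2.ne else ∅ with hC'
  have hlt : ∀ (i j : Fin c) (h1 : i < j), C' i j = C i j h1.ne := by
    intro i j h1
    rw [hC']
    dsimp only
    rw [dif_pos h1]
  have hgt : ∀ (i j : Fin c) (h1 : j < i), C' i j = C j i h1.ne := by
    intro i j h1
    rw [hC']
    dsimp only
    rw [dif_neg (not_lt.mpr h1.le), dif_pos h1]
  have key1 : ∀ (i j : Fin c), i ≠ j → ∀ u v : V,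
      (Hg i j).Adj u v → (u ∈ C' i j ↔ v ∉ C' i j) := by
    intro i j hij u v huv
    rcases lt_trichotomy i j with h1 | h1 | h1
    · rw [hlt i j h1]
      exact hC1 i j h1.ne u v huv
    · exact absurd h1 hij
    · rw [hgt i j h1]
      exact hC1 j i h1.ne u v ((hHsym i j u v).mp huv)
  have key2 : ∀ (i j : Fin c), i ≠ j → ∀ v, v ∉ C' i j → ∀ u w : V,
      (Hg i j).Adj v u → (Hg i j).Adj v w → u = w := by
    intro i j hij v hv u w hvu hvw
    rcases lt_trichotomy i j with h1 | h1 | h1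
    · rw [hlt i j h1] at hv
      exact hC2 i j h1.ne v hv u w hvu hvw
    · exact absurd h1 hij
    · rw [hgt i j h1] at hv
      exact hC2 j i h1.ne v hv u w ((hHsym i j v u).mp hvu) ((hHsym i j v w).mp hvw)
  have hC'sym : ∀ i j : Fin c, C' i j = C' j i := by
    intro i j
    rcases lt_trichotomy i j with h1 | h1 | h1
    · rw [hlt i j h1, hgt j i h1]
    · subst h1; rfl
    · rw [hgt i j h1, hlt j i h1]
  refine ⟨fun u v => G.Adj u v ∧ u ∈ C' (γ u) (γ v), ?_, ?_, ?_⟩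
  · intro u v
    constructor
    · intro huv
      have hne := hprop u v huv
      have hH : (Hg (γ u) (γ v)).Adj u v := (hAdj _ _ u v).mpr
        ⟨huv, Or.inl rfl, Or.inr rfl⟩
      rcases em (u ∈ C' (γ u) (γ v)) with hu | hu
      · exact Or.inl ⟨huv, hu⟩
      · refine Or.inr ⟨huv.symm, ?_⟩
        rw [hC'sym]
        by_contra hv
        exact hu ((key1 _ _ hne u v hH).mpr hv)
    · rintro (⟨huv, _⟩ | ⟨hvu, _⟩)
      · exact huv
      · exact hvu.symm
  · rintro u v ⟨huv, hu⟩ ⟨hvu, hv⟩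
    have hne := hprop u v huv
    have hH : (Hg (γ u) (γ v)).Adj u v := (hAdj _ _ u v).mpr
      ⟨huv, Or.inl rfl, Or.inr rfl⟩
    rw [hC'sym] at hv
    exact (key1 _ _ hne u v hH).mp hu hv
  · rintro u v ⟨huv, hu⟩ w hvw hcw
    have hne := hprop u v huv
    have hHvu : (Hg (γ u) (γ v)).Adj v u := (hAdj _ _ v u).mpr
      ⟨huv.symm, Or.inr rfl, Or.inl rfl⟩
    have hHvw : (Hg (γ u) (γ v)).Adj v w := (hAdj _ _ v w).mpr
      ⟨hvw, Or.inr rfl, Or.inl (by rw [hcw])⟩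
    have hvC : v ∉ C' (γ u) (γ v) := (key1 _ _ hne u v
      ((hAdj _ _ u v).mpr ⟨huv, Or.inl rfl, Or.inr rfl⟩)).mp hu
    exact key2 _ _ hne v hvC w u hHvw hHvu
end

section
/- Let W be a closed walk in a graph whose edge set is partitioned into 'tree edges' and 'special edges', such that no two consecutive edges of W are special (where the last edge and first edge also count as consecutive), and suppose W is not a cycle. Then there exists a strictly shorter closed walk with no two consecutive special edges. -/
/-- A closed walk of length `m` in `G` (given by its cyclic sequence of vertices)
such that no two cyclically consecutive edges are special. -/
def GoodClosedWalk {V : Type*} (G : SimpleGraph V) (special : Sym2 V → Prop)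
    (m : ℕ) (v : ZMod m → V) : Prop :=
  (∀ i : ZMod m, G.Adj (v i) (v (i + 1))) ∧
  ∀ i : ZMod m, ¬ (special s(v i, v (i + 1)) ∧ special s(v (i + 1), v (i + 2)))

lemma subwalk_aux {V : Type*} (G : SimpleGraph V) (special : Sym2 V → Prop)
    (m : ℕ) [NeZero m] (v : ZMod m → V)
    (hwalk : GoodClosedWalk G special m v)
    (i j : ZMod m) (hij : v i = v j) (k : ℕ) (hk0 : 0 < k)
    (hk : i + (k : ZMod m) = j)
    (hgood : ¬ (special s(v (j - 1), v j) ∧ special s(v i, v (i + 1)))) :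
    ∃ w : ZMod k → V, GoodClosedWalk G special k w := by
  haveI : NeZero k := ⟨hk0.ne'⟩
  set w : ZMod k → V := fun t => v (i + ((t.val : ℕ) : ZMod m)) with hw
  -- value of index coordinates
  have hvalcast : ∀ t : ZMod k, ((t.val : ℕ) : ZMod k) = t := by
    intro t; simp [ZMod.natCast_val, ZMod.cast_id]
  have hval1 : ∀ t : ZMod k, (t + 1).val = (t.val + 1) % k := by
    intro t
    conv_lhs => rw [← hvalcast t]
    rw [show ((t.val : ℕ) : ZMod k) + 1 = ((t.val + 1 : ℕ) : ZMod k) by push_cast; ring]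
    exact ZMod.val_natCast _ _
  have hstep : ∀ t : ZMod k, w (t + 1) = v (i + ((t.val : ℕ) : ZMod m) + 1) := by
    intro t
    rcases lt_or_eq_of_le (Nat.succ_le_of_lt (ZMod.val_lt t)) with h | h
    · have : (t + 1).val = t.val + 1 := by rw [hval1 t, Nat.mod_eq_of_lt h]
      simp only [hw, this]
      push_cast
      ring_nf
    · have h0 : (t + 1).val = 0 := by rw [hval1 t, show t.val + 1 = k from h, Nat.mod_self]
      have hjj : i + ((t.val : ℕ) : ZMod m) + 1 = j := by
        have hkk := congrArg (fun n : ℕ => (n : ZMod m)) h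
        push_cast at hkk
        rw [← hk, ← hkk]
        ring
      simp only [hw, h0, hjj]
      simpa using hij
  -- also relation of a_{t+1} to a_t + 1 in non-wrap case
  refine ⟨w, ?_, ?_⟩
  · intro t
    rw [hstep t]
    exact hwalk.1 _
  · intro t
    rintro ⟨p1, p2⟩
    rw [hstep t] at p1
    rw [show (t + 2 : ZMod k) = t + 1 + 1 by ring, hstep (t + 1)] at p2
    simp only [hw] at p1 p2
    rcases lt_or_eq_of_le (Nat.succ_le_of_lt (ZMod.val_lt t)) with h | h
    · have hv : (t + 1).val = t.val + 1 := by rw [hval1 t, Nat.mod_eq_of_lt h]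
      rw [hv] at p2
      push_cast at p2
      apply hwalk.2 (i + ((t.val : ℕ) : ZMod m))
      refine ⟨p1, ?_⟩
      convert p2 using 3 <;> ring
    · have h0 : (t + 1).val = 0 := by rw [hval1 t, show t.val + 1 = k from h, Nat.mod_self]
      have hjj : i + ((t.val : ℕ) : ZMod m) + 1 = j := by
        have hkk := congrArg (fun n : ℕ => (n : ZMod m)) h
        push_cast at hkk
        rw [← hk, ← hkk]
        ring
      have haj : i + ((t.val : ℕ) : ZMod m) = j - 1 := by rw [← hjj]; ring
      rw [hjj, haj] at p1
      rw [h0] at p2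
      simp only [Nat.cast_zero, add_zero] at p2
      exact hgood ⟨p1, p2⟩

/-- If a closed walk with no two consecutive special edges is not a cycle, then there is
a strictly shorter closed walk with no two consecutive special edges. -/
theorem shorten_closed_walk {V : Type*} (G : SimpleGraph V) (special : Sym2 V → Prop)
    (m : ℕ) (hm : 0 < m) (v : ZMod m → V)
    (hwalk : GoodClosedWalk G special m v)
    (hnotcycle : ¬ Function.Injective v) :
    ∃ m' : ℕ, 0 < m' ∧ m' < m ∧ ∃ w : ZMod m' → V, GoodClosedWalk G special m' w := by
  haveI : NeZero m := ⟨hm.ne'⟩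
  rw [Function.not_injective_iff] at hnotcycle
  obtain ⟨i, j, hij, hne⟩ := hnotcycle
  have hsub : i - j ≠ 0 := sub_ne_zero.mpr hne
  have hsub' : j - i ≠ 0 := sub_ne_zero.mpr (Ne.symm hne)
  have hcast : ∀ a : ZMod m, ((a.val : ℕ) : ZMod m) = a := by
    intro a; simp [ZMod.natCast_val, ZMod.cast_id]
  by_cases hA : special s(v (j - 1), v j) ∧ special s(v i, v (i + 1))
  · -- use the j → i subwalk
    refine ⟨(i - j).val, Nat.pos_of_ne_zero (by simpa [ZMod.val_eq_zero] using hsub),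
      ZMod.val_lt _, ?_⟩
    apply subwalk_aux G special m v hwalk j i hij.symm _ (Nat.pos_of_ne_zero
      (by simpa [ZMod.val_eq_zero] using hsub)) (by rw [hcast]; ring)
    rintro ⟨h1, h2⟩
    have := hwalk.2 (j - 1)
    apply this
    constructor
    · simpa using hA.1
    · have e1 : j - 1 + 1 = j := by ring
      have e2 : j - 1 + 2 = j + 1 := by ring
      rw [e1, e2]
      exact h2
  · refine ⟨(j - i).val, Nat.pos_of_ne_zero (by simpa [ZMod.val_eq_zero] using hsub'),
      ZMod.val_lt _, ?_⟩
    exact subwalk_aux G special m v hwalk i j hij _ (Nat.pos_of_ne_zero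
      (by simpa [ZMod.val_eq_zero] using hsub')) (by rw [hcast]; ring) hA
end

section
/- Let Y be a rooted binary tree with n ≥ 2 leaves and τ : V(Y) → [n] a map that is a bijection from the internal nodes onto [n-1], equals n on every leaf, and is strictly increasing along root-to-leaf paths. Then the boundary ∂_t Y = {u ≠ root : τ(u) ≥ t, τ(parent(u)) < t} has exactly t elements, for every t with 2 ≤ t ≤ n. -/
open Finset

/-- In a rooted binary tree with `n ≥ 2` leaves, ranked by `τ` (bijective from internal
nodes onto `[n-1]`, equal to `n` on leaves, increasing along root-to-leaf paths), the
boundary `∂ₜ Y` has exactly `t` elements for every `2 ≤ t ≤ n`. -/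
theorem boundary_card {V : Type*} [Fintype V] [DecidableEq V]
    (root : V) (parent : V → V) (τ : V → ℕ) (n : ℕ)
    (hroot : parent root = root)
    (hreach : ∀ v : V, ∃ k : ℕ, parent^[k] v = root)
    -- every internal node has exactly two children
    (hbin : ∀ v : V, (univ.filter (fun u => u ≠ root ∧ parent u = v)).card = 0 ∨
                     (univ.filter (fun u => u ≠ root ∧ parent u = v)).card = 2)
    -- there are `n ≥ 2` leaves
    (hn : (univ.filter (fun v : V =>
      (univ.filter (fun u => u ≠ root ∧ parent u = v)).card = 0)).card = n)
    (hn2 : 2 ≤ n)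
    -- τ is a bijection from the internal nodes onto [n-1]
    (hbij : Set.BijOn τ {v : V | (univ.filter (fun u => u ≠ root ∧ parent u = v)).card = 2}
      (Set.Icc 1 (n - 1)))
    -- τ equals n on every leaf
    (hleaf : ∀ v : V, (univ.filter (fun u => u ≠ root ∧ parent u = v)).card = 0 → τ v = n)
    -- τ is strictly increasing along root-to-leaf paths
    (hmono : ∀ v : V, v ≠ root → τ (parent v) < τ v)
    (t : ℕ) (ht2 : 2 ≤ t) (htn : t ≤ n) :
    (univ.filter (fun u : V => u ≠ root ∧ t ≤ τ u ∧ τ (parent u) < t)).card = t := by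
  classical
  -- every node has τ ≥ 1
  have hτ1 : ∀ v : V, 1 ≤ τ v := by
    intro v
    rcases hbin v with h | h
    · rw [hleaf v h]; omega
    · exact (hbij.mapsTo h).1
  -- root has strictly smallest τ
  have hrootlt : ∀ k : ℕ, ∀ v : V, v ≠ root → parent^[k] v = root → τ root < τ v := by
    intro k
    induction k with
    | zero => intro v hv hk; simp at hk; exact absurd hk hv
    | succ k ih =>
      intro v hv hk
      rw [Function.iterate_succ_apply] at hk
      by_cases hp : parent v = root
      · rw [← hp]; exact hmono v hv
      · exact lt_trans (ih (parent v) hp hk) (hmono v hv)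
  have hrootlt' : ∀ v : V, v ≠ root → τ root < τ v := by
    intro v hv
    obtain ⟨k, hk⟩ := hreach v
    exact hrootlt k v hv hk
  -- root has a child
  have hexchild : ∃ u : V, u ≠ root ∧ parent u = root := by
    have h2 : 1 < Fintype.card V := by
      have hle : (univ.filter (fun v : V =>
          (univ.filter (fun u => u ≠ root ∧ parent u = v)).card = 0)).card
          ≤ Fintype.card V := by
        rw [← Finset.card_univ]; exact card_filter_le _ _
      omega
    obtain ⟨v, hv⟩ := Fintype.exists_ne_of_one_lt_card h2 root
    obtain ⟨k, hk⟩ := hreach v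
    clear hrootlt hrootlt'
    induction k generalizing v with
    | zero => simp at hk; exact absurd hk hv
    | succ k ih =>
      rw [Function.iterate_succ_apply] at hk
      by_cases hp : parent v = root
      · exact ⟨v, hv, hp⟩
      · exact ih (parent v) hp hk
  have hrootint : (univ.filter (fun u => u ≠ root ∧ parent u = root)).card = 2 := by
    obtain ⟨u, hu, hp⟩ := hexchild
    rcases hbin root with h | h
    · exfalso
      have hmem : u ∈ univ.filter (fun u => u ≠ root ∧ parent u = root) := by
        simp [hu, hp]
      rw [Finset.card_eq_zero] at h
      simp [h] at hmem
    · exact h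
  have hτroot : τ root = 1 := by
    have h1 : (1:ℕ) ∈ Set.Icc 1 (n-1) := ⟨le_refl 1, by omega⟩
    obtain ⟨w, hw, hτw⟩ := hbij.surjOn h1
    by_cases hwr : w = root
    · rw [← hwr]; exact hτw
    · have h2 := hrootlt' w hwr
      have h3 := hτ1 root
      omega
  -- parent of a non-root node is internal
  have hparent2 : ∀ u : V, u ≠ root →
      (univ.filter (fun x => x ≠ root ∧ parent x = parent u)).card = 2 := by
    intro u hu
    rcases hbin (parent u) with h | h
    · exfalso
      have hmem : u ∈ univ.filter (fun x => x ≠ root ∧ parent x = parent u) := by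
        simp [hu]
      rw [Finset.card_eq_zero] at h
      simp [h] at hmem
    · exact h
  have hτge2 : ∀ u : V, u ≠ root → 2 ≤ τ u := by
    intro u hu
    have h1 := hmono u hu
    have h2 := hτ1 (parent u)
    omega
  have hpar_eq : ∀ u : V, u ≠ root → ∀ w : V,
      (univ.filter (fun x => x ≠ root ∧ parent x = w)).card = 2 →
      τ (parent u) = τ w → parent u = w := by
    intro u hu w hw hτ
    exact hbij.injOn (hparent2 u hu) hw hτ
  revert htn
  induction t, ht2 using Nat.le_induction with
  | base =>
    intro htn
    have heq : univ.filter (fun u : V => u ≠ root ∧ 2 ≤ τ u ∧ τ (parent u) < 2)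
         = univ.filter (fun u => u ≠ root ∧ parent u = root) := by
      ext u
      simp only [mem_filter, mem_univ, true_and]
      constructor
      · rintro ⟨hu, _, hp⟩
        have h1 : τ (parent u) = τ root := by
          have := hτ1 (parent u); rw [hτroot]; omega
        exact ⟨hu, hpar_eq u hu root hrootint h1⟩
      · rintro ⟨hu, hp⟩
        exact ⟨hu, hτge2 u hu, by rw [hp, hτroot]; omega⟩
    rw [heq, hrootint]
  | succ t ht ih =>
    intro htn
    have hBt := ih (by omega)
    obtain ⟨w, hw, hτw⟩ := hbij.surjOn (show t ∈ Set.Icc 1 (n-1) from ⟨by omega, by omega⟩)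
    have hw' : (univ.filter (fun x => x ≠ root ∧ parent x = w)).card = 2 := hw
    have hwroot : w ≠ root := by
      intro h; rw [h, hτroot] at hτw; omega
    have hwmem : w ∈ univ.filter (fun u : V => u ≠ root ∧ t ≤ τ u ∧ τ (parent u) < t) := by
      have := hmono w hwroot
      simp only [mem_filter, mem_univ, true_and]
      exact ⟨hwroot, by omega, by omega⟩
    have hsplit : univ.filter (fun u : V => u ≠ root ∧ t+1 ≤ τ u ∧ τ (parent u) < t+1)
        = ((univ.filter (fun u : V => u ≠ root ∧ t ≤ τ u ∧ τ (parent u) < t)).erase w)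
          ∪ univ.filter (fun u => u ≠ root ∧ parent u = w) := by
      ext u
      simp only [mem_union, mem_erase, mem_filter, mem_univ, true_and]
      constructor
      · rintro ⟨hu, h1, h2⟩
        by_cases hpu : τ (parent u) = t
        · exact Or.inr ⟨hu, hpar_eq u hu w hw' (by rw [hpu, hτw])⟩
        · refine Or.inl ⟨?_, hu, by omega, by omega⟩
          intro h
          rw [h, hτw] at h1
          omega
      · rintro (⟨hne, hu, h1, h2⟩ | ⟨hu, hp⟩)
        · refine ⟨hu, ?_, by omega⟩
          rcases hbin u with hl | hi
          · have := hleaf u hl; omega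
          · by_cases heq : τ u = t
            · exact absurd (hbij.injOn hi hw (by rw [heq, hτw])) hne
            · omega
        · have hlt : τ w < τ u := by rw [← hp]; exact hmono u hu
          exact ⟨hu, by omega, by rw [hp, hτw]; omega⟩
    have hdisj : Disjoint
        ((univ.filter (fun u : V => u ≠ root ∧ t ≤ τ u ∧ τ (parent u) < t)).erase w)
        (univ.filter (fun u => u ≠ root ∧ parent u = w)) := by
      rw [Finset.disjoint_left]
      intro u hu1 hu2
      simp only [mem_erase, mem_filter, mem_univ, true_and] at hu1 hu2
      have : τ (parent u) = t := by rw [hu2.2, hτw]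
      omega
    rw [hsplit, card_union_of_disjoint hdisj, card_erase_of_mem hwmem, hBt, hw']
    omega
end
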